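/- Let (V, E) be a finite acyclic directed graph, d ∈ V a vertex with no outgoing edges, τ : V → {ALL, ANY} a labeling, and for each u ≠ d let S(u) ⊆ {v | E u v}. Define c : V → Finset ℕ by the well-founded recursion: c(d) = {1}; c(u) = {0} for u ≠ d with S(u) = ∅; c(u) = ⊗_{v ∈ S(u)} c(v) (the iterated sumset over all v ∈ S(u)) if u ≠ d, τ(u) = ALL, and S(u) ≠ ∅; and c(u) = ⋃_{v ∈ S(u)} c(v) if u ≠ d, τ(u) = ANY, and S(u) ≠ ∅. Then for every vertex u, c(u) equals the set of natural numbers n such that some forwarding tree rooted at u has exactly n leaves labeled d. This is the correctness of Coral's backward counting procedure (Algorithm 1 with Equations (1) and (2)): c(u) is exactly the set, over all universes, of the number of packet copies delivered from u to the destination d. -/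
import Mathlib


open Pointwise

/-- The type of a forwarding action: `ALL` duplicates the packet to every next-hop in the
group, `ANY` nondeterministically forwards it to one next-hop of the group. -/
inductive FwdType : Type where
  | ALL : FwdType
  | ANY : FwdType
deriving DecidableEq

/-- A finite rooted tree whose nodes are labeled by vertices of `V`. -/
inductive FTree (V : Type*) : Type _ where
  | node : V → List (FTree V) → FTree V

/-- The label of the root of a tree. -/
def FTree.label {V : Type*} : FTree V → V
  | .node v _ => v

mutual
  /-- The number of leaves of a tree that are labeled `d`. -/
  def FTree.countD {V : Type*} [DecidableEq V] (d : V) : FTree V → ℕ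
    | .node v [] => if v = d then 1 else 0
    | .node _ (c :: cs) => FTree.countD d c + FTree.countDList d cs
  /-- The total number of leaves labeled `d` in a list of trees. -/
  def FTree.countDList {V : Type*} [DecidableEq V] (d : V) : List (FTree V) → ℕ
    | [] => 0
    | c :: cs => FTree.countD d c + FTree.countDList d cs
end

/-- `ValidFT d τ S t` holds when `t` is a forwarding tree: every node labeled `d` is a
leaf; every node labeled `u ≠ d` with `S u = ∅` is a leaf; every node labeled `u ≠ d` with
`τ u = ALL` and `S u ≠ ∅` has exactly one child labeled `v` for each `v ∈ S u` (the
multiset of children labels equals `S u`); and every node labeled `u ≠ d` with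
`τ u = ANY` and `S u ≠ ∅` has exactly one child, labeled by some `v ∈ S u`. -/
inductive ValidFT {V : Type*} (d : V) (τ : V → FwdType) (S : V → Finset V) :
    FTree V → Prop where
  | dest : ValidFT d τ S (.node d [])
  | drop (u : V) : u ≠ d → S u = ∅ → ValidFT d τ S (.node u [])
  | all (u : V) (cs : List (FTree V)) : u ≠ d → τ u = .ALL → (S u).Nonempty →
      (↑(cs.map FTree.label) : Multiset V) = (S u).val →
      (∀ c ∈ cs, ValidFT d τ S c) → ValidFT d τ S (.node u cs)
  | any (u : V) (c : FTree V) : u ≠ d → τ u = .ANY → (S u).Nonempty →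
      c.label ∈ S u → ValidFT d τ S c → ValidFT d τ S (.node u [c])

lemma FTree.countDList_append {V : Type*} [DecidableEq V] (d : V) (l1 l2 : List (FTree V)) :
    FTree.countDList d (l1 ++ l2) = FTree.countDList d l1 + FTree.countDList d l2 := by
  induction l1 with
  | nil => simp [FTree.countDList]
  | cons a l ih => simp [FTree.countDList, ih]; omega

lemma FTree.countD_node {V : Type*} [DecidableEq V] (d v : V) (cs : List (FTree V))
    (h : cs ≠ []) : FTree.countD d (FTree.node v cs) = FTree.countDList d cs := by
  cases cs with
  | nil => exact absurd rfl h
  | cons a l => simp [FTree.countD, FTree.countDList]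

lemma sum_set_aux {V : Type*} [DecidableEq V] (d : V) (τ : V → FwdType) (S : V → Finset V)
    (c : V → Finset ℕ) (F : Finset V)
    (h : ∀ v ∈ F, (↑(c v) : Set ℕ) =
      {n : ℕ | ∃ t : FTree V, t.label = v ∧ ValidFT d τ S t ∧ FTree.countD d t = n}) :
    (↑(∑ v ∈ F, c v) : Set ℕ) =
      {n : ℕ | ∃ cs : List (FTree V), (↑(cs.map FTree.label) : Multiset V) = F.val ∧
        (∀ t ∈ cs, ValidFT d τ S t) ∧ FTree.countDList d cs = n} := by
  classical
  induction F using Finset.induction_on with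
  | empty =>
      ext n
      simp only [Finset.sum_empty, Finset.coe_zero, Set.mem_zero, Set.mem_setOf_eq,
        Finset.empty_val, Multiset.coe_eq_zero, List.map_eq_nil_iff]
      constructor
      · rintro rfl
        exact ⟨[], rfl, by simp, rfl⟩
      · rintro ⟨cs, rfl, -, rfl⟩
        rfl
  | @insert a F ha ih =>
      have hF : ∀ v ∈ F, (↑(c v) : Set ℕ) =
          {n : ℕ | ∃ t : FTree V, t.label = v ∧ ValidFT d τ S t ∧ FTree.countD d t = n} :=
        fun v hv => h v (Finset.mem_insert_of_mem hv)
      rw [Finset.sum_insert ha, Finset.coe_add]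
      ext n
      constructor
      · rintro ⟨x, hx, y, hy, rfl⟩
        rw [h a (Finset.mem_insert_self a F)] at hx
        rw [ih hF] at hy
        obtain ⟨t, hlt, hvt, hct⟩ := hx
        obtain ⟨cs, hlcs, hvcs, hccs⟩ := hy
        refine ⟨t :: cs, ?_, ?_, ?_⟩
        · rw [Finset.insert_val_of_notMem ha, List.map_cons, hlt, ← Multiset.cons_coe, hlcs]
        · intro t' ht'
          rcases List.mem_cons.mp ht' with rfl | h'
          · exact hvt
          · exact hvcs t' h'
        · simp [FTree.countDList, hct, hccs]
      · rintro ⟨cs, hlcs, hvcs, rfl⟩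
        have hamem : a ∈ cs.map FTree.label := by
          have : a ∈ (↑(cs.map FTree.label) : Multiset V) := by
            rw [hlcs, Finset.insert_val_of_notMem ha]; exact Multiset.mem_cons_self a _
          simpa using this
        obtain ⟨t, htcs, hlt⟩ := List.mem_map.mp hamem
        obtain ⟨l1, l2, rfl⟩ := List.append_of_mem htcs
        have hmul : (↑((l1 ++ l2).map FTree.label) : Multiset V) = F.val := by
          have h1 : (↑((l1 ++ t :: l2).map FTree.label) : Multiset V)
              = a ::ₘ ↑((l1 ++ l2).map FTree.label) := by
            simp [hlt]
          rw [h1, Finset.insert_val_of_notMem ha] at hlcs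
          exact (Multiset.cons_inj_right a).mp hlcs
        refine ⟨FTree.countD d t, ?_, FTree.countDList d (l1 ++ l2), ?_, ?_⟩
        · rw [h a (Finset.mem_insert_self a F)]
          exact ⟨t, hlt, hvcs t htcs, rfl⟩
        · rw [ih hF]
          refine ⟨l1 ++ l2, hmul, fun t' ht' => hvcs t' ?_, rfl⟩
          · rcases List.mem_append.mp ht' with h' | h'
            · exact List.mem_append.mpr (Or.inl h')
            · exact List.mem_append.mpr (Or.inr (List.mem_cons_of_mem _ h'))
        · rw [FTree.countDList_append, FTree.countDList_append]
          simp [FTree.countDList]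
          omega

/-- Let `(V, E)` be a finite acyclic directed graph, `d` a vertex with no
outgoing edges, `τ : V → {ALL, ANY}` a labeling, and `S u ⊆ {v | E u v}` for each `u ≠ d`.
Let `c : V → Finset ℕ` satisfy the well-founded recursion: `c d = {1}`; `c u = {0}` for
`u ≠ d` with `S u = ∅`; `c u = ⊗_{v ∈ S u} c v` (iterated sumset) for `u ≠ d` with
`τ u = ALL` and `S u ≠ ∅`; and `c u = ⋃_{v ∈ S u} c v` for `u ≠ d` with `τ u = ANY` and
`S u ≠ ∅`. Then for every vertex `u`, `c u` equals the set of natural numbers `n` such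
that some forwarding tree rooted at `u` has exactly `n` leaves labeled `d`. -/
theorem counting_correct {V : Type} [Fintype V] [DecidableEq V]
    (E : V → V → Prop) (hacyc : Irreflexive (Relation.TransGen E))
    (d : V) (hd : ∀ v, ¬ E d v)
    (τ : V → FwdType)
    (S : V → Finset V) (hS : ∀ u, u ≠ d → ∀ v ∈ S u, E u v)
    (c : V → Finset ℕ)
    (hcd : c d = {1})
    (hcdrop : ∀ u, u ≠ d → S u = ∅ → c u = {0})
    (hcall : ∀ u, u ≠ d → τ u = .ALL → (S u).Nonempty → c u = ∑ v ∈ S u, c v)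
    (hcany : ∀ u, u ≠ d → τ u = .ANY → (S u).Nonempty → c u = (S u).biUnion c) :
    ∀ u : V, (↑(c u) : Set ℕ) =
      {n : ℕ | ∃ t : FTree V, t.label = u ∧ ValidFT d τ S t ∧ FTree.countD d t = n} := by
    classical
  have wf : WellFounded (fun a b : V => E b a) := by
    have wfr : WellFounded (fun a b : V => Relation.TransGen E b a) := by
      haveI : IsTrans V (fun a b : V => Relation.TransGen E b a) :=
        ⟨fun a b c hab hbc => hbc.trans hab⟩
      haveI : IsIrrefl V (fun a b : V => Relation.TransGen E b a) :=
        ⟨fun a h => hacyc a h⟩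
      exact Finite.wellFounded_of_trans_of_irrefl _
    exact Subrelation.wf (fun h => Relation.TransGen.single h) wfr
  intro u
  induction u using wf.induction with
  | _ u IH =>
  by_cases hud : u = d
  · subst hud
    rw [hcd]
    ext n
    simp only [Finset.coe_singleton, Set.mem_singleton_iff, Set.mem_setOf_eq]
    constructor
    · rintro rfl
      exact ⟨FTree.node u [], rfl, ValidFT.dest, by simp [FTree.countD]⟩
    · rintro ⟨t, hl, hv, hc⟩
      cases hv with
      | dest => simp [FTree.countD] at hc; omega
      | drop u' h1 h2 => exact absurd hl h1
      | all u' cs h1 _ _ _ _ => exact absurd hl h1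
      | any u' c' h1 _ _ _ _ => exact absurd hl h1
  · by_cases hSe : S u = ∅
    · rw [hcdrop u hud hSe]
      ext n
      simp only [Finset.coe_singleton, Set.mem_singleton_iff, Set.mem_setOf_eq]
      constructor
      · rintro rfl
        exact ⟨FTree.node u [], rfl, ValidFT.drop u hud hSe, by simp [FTree.countD, hud]⟩
      · rintro ⟨t, hl, hv, hc⟩
        cases hv with
        | dest => exact absurd (show u = d from hl.symm) hud
        | drop u' h1 h2 =>
            have hl' : u' = u := hl
            subst hl'
            simp [FTree.countD, hud] at hc
            omega
        | all u' cs h1 h2 h3 h4 h5 =>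
            have hl' : u' = u := hl
            subst hl'
            rw [hSe] at h3; exact absurd h3 (by simp)
        | any u' c' h1 h2 h3 h4 h5 =>
            have hl' : u' = u := hl
            subst hl'
            rw [hSe] at h3; exact absurd h3 (by simp)
    · have hSne : (S u).Nonempty := Finset.nonempty_iff_ne_empty.mpr hSe
      have hIH : ∀ v ∈ S u, (↑(c v) : Set ℕ) =
          {n : ℕ | ∃ t : FTree V, t.label = v ∧ ValidFT d τ S t ∧ FTree.countD d t = n} :=
        fun v hv => IH v (hS u hud v hv)
      cases hτ : τ u with
      | ALL =>
          rw [hcall u hud hτ hSne, sum_set_aux d τ S c (S u) hIH]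
          ext n
          simp only [Set.mem_setOf_eq]
          constructor
          · rintro ⟨cs, hlcs, hvcs, rfl⟩
            have hne : cs ≠ [] := by
              rintro rfl
              exact hSe (Finset.val_eq_zero.mp (by simpa using hlcs.symm))
            exact ⟨FTree.node u cs, rfl, ValidFT.all u cs hud hτ hSne hlcs hvcs,
              FTree.countD_node d u cs hne⟩
          · rintro ⟨t, hl, hv, rfl⟩
            cases hv with
            | dest => exact absurd (show u = d from hl.symm) hud
            | drop u' h1 h2 =>
                have hl' : u' = u := hl
                subst hl'
                exact absurd h2 hSe
            | all u' cs h1 h2 h3 h4 h5 =>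
                have hl' : u' = u := hl
                subst hl'
                have hne : cs ≠ [] := by
                  rintro rfl
                  exact hSe (Finset.val_eq_zero.mp (by simpa using h4.symm))
                exact ⟨cs, h4, h5, (FTree.countD_node d _ cs hne).symm⟩
            | any u' c' h1 h2 h3 h4 h5 =>
                have hl' : u' = u := hl
                subst hl'
                rw [hτ] at h2; exact absurd h2 (by simp)
      | ANY =>
          rw [hcany u hud hτ hSne]
          ext n
          simp only [Finset.coe_biUnion, Set.mem_iUnion, Finset.mem_coe, Set.mem_setOf_eq]
          constructor
          · rintro ⟨v, hv, hn⟩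
            rw [← Finset.mem_coe, hIH v hv] at hn
            obtain ⟨t, hl, hvt, hct⟩ := hn
            refine ⟨FTree.node u [t], rfl, ValidFT.any u t hud hτ hSne (hl ▸ hv) hvt, ?_⟩
            simp [FTree.countD, FTree.countDList, hct]
          · rintro ⟨t, hl, hv, rfl⟩
            cases hv with
            | dest => exact absurd (show u = d from hl.symm) hud
            | drop u' h1 h2 =>
                have hl' : u' = u := hl
                subst hl'
                exact absurd h2 hSe
            | all u' cs h1 h2 h3 h4 h5 =>
                have hl' : u' = u := hl
                subst hl'
                rw [hτ] at h2; exact absurd h2 (by simp)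
            | any u' c' h1 h2 h3 h4 h5 =>
                have hl' : u' = u := hl
                subst hl'
                refine ⟨c'.label, h4, ?_⟩
                rw [← Finset.mem_coe, hIH c'.label h4]
                exact ⟨c', rfl, h5, by simp [FTree.countD, FTree.countDList]⟩
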